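/- (Lemma III.5) Let Assumption 2 hold and let (x^k), (y^k), (p^k) be BADMM iterates. Then there exist σ₀ > 0 and σ₁ > 0 such that, defining L̃(x, y, p, x̃) := L_α(x, y, p) + (σ₀/2)‖x − x̃‖², for every k ≥ 1: σ₁(‖x^{k+1} − x^k‖² + ‖y^{k+1} − y^k‖²) ≤ L̃(x^k, y^k, p^k, x^{k−1}) − L̃(x^{k+1}, y^{k+1}, p^{k+1}, x^k). -/

import Mathlib

open scoped InnerProductSpace

/-- The augmented Lagrangian `L_α(x,y,p)`. -/
noncomputable def augL {n₁ n₂ m : ℕ}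
    (A : EuclideanSpace ℝ (Fin n₁) →L[ℝ] EuclideanSpace ℝ (Fin m))
    (B : EuclideanSpace ℝ (Fin n₂) →L[ℝ] EuclideanSpace ℝ (Fin m))
    (f : EuclideanSpace ℝ (Fin n₁) → ℝ) (g : EuclideanSpace ℝ (Fin n₂) → ℝ)
    (α : ℝ) (x : EuclideanSpace ℝ (Fin n₁)) (y : EuclideanSpace ℝ (Fin n₂))
    (p : EuclideanSpace ℝ (Fin m)) : ℝ :=
  f x + g y + ⟪p, A x - B y⟫_ℝ + α / 2 * ‖A x - B y‖ ^ 2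

/-- Bregman distance of a differentiable function `h` with gradient `h'`. -/
noncomputable def bregman {n : ℕ} (h : EuclideanSpace ℝ (Fin n) → ℝ)
    (h' : EuclideanSpace ℝ (Fin n) → EuclideanSpace ℝ (Fin n))
    (u v : EuclideanSpace ℝ (Fin n)) : ℝ :=
  h u - h v - ⟪h' v, u - v⟫_ℝ

/-!
Both primal updates are Bregman proximal steps with a strongly convex objective or kernel, so
each lowers `L_α` by a multiple of its squared step length. The dual update raises `L_α` by
`α ‖A x - B y‖² = ‖p⁺ - p‖² / α`. Optimality of the `x`-step writes `Aᵀ p^{k+1}` as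
`∇φ(x^k) - ∇φ(x^{k+1}) - ∇f(x^{k+1})`, so `AAᵀ ⪰ μ₀ I` and the Lipschitz bounds control
`‖p^{k+1} - p^k‖²` by the last two `x`-steps. The lower bound on `α` makes the net decrease
positive once the older `x`-step is charged to the term `σ₀/2 ‖x^k - x^{k-1}‖²`.
-/

open Set InnerProductSpace ContinuousLinearMap

section Convex

variable {E : Type*} [NormedAddCommGroup E] [InnerProductSpace ℝ E] [CompleteSpace E]

theorem ConvexOn.add_inner_le_of_hasGradientAt {h : E → ℝ} {h' v : E}
    (hc : ConvexOn ℝ univ h) (hd : HasGradientAt h h' v) (u : E) :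
    h v + ⟪h', u - v⟫_ℝ ≤ h u := by
  let ℓ : ℝ →ᵃ[ℝ] E := AffineMap.lineMap v u
  have hline : HasDerivAt (h ∘ ℓ) ⟪h', u - v⟫_ℝ 0 := by
    have hℓ : HasDerivAt ℓ (u - v) 0 := AffineMap.hasDerivAt_lineMap
    simpa using (hasGradientAt_iff_hasFDerivAt.mp hd).comp_hasDerivAt_of_eq 0 hℓ (by simp [ℓ])
  have hslope := (hc.comp_affineMap ℓ).le_slope_of_hasDerivAt (mem_univ 0) (mem_univ 1)
    zero_lt_one hline
  simp only [slope_def_field, Function.comp_apply, AffineMap.lineMap_apply_one,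
    AffineMap.lineMap_apply_zero, sub_zero, div_one, ℓ] at hslope
  linarith

theorem hasGradientAt_half_mul_norm_sq (μ : ℝ) (v : E) :
    HasGradientAt (fun w : E => μ / 2 * ‖w‖ ^ 2) (μ • v) v := by
  rw [hasGradientAt_iff_hasFDerivAt]
  refine ((hasStrictFDerivAt_norm_sq v).hasFDerivAt.const_mul (μ / 2)).congr_fderiv ?_
  ext w
  simp only [smul_apply, coe_innerSL_apply, nsmul_eq_mul, Nat.cast_ofNat, smul_eq_mul, map_smul,
    toDual_apply_apply]
  ring

theorem StrongConvexOn.add_inner_add_sq_le_of_hasGradientAt {h : E → ℝ} {h' v : E} {μ : ℝ}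
    (hc : StrongConvexOn univ μ h) (hd : HasGradientAt h h' v) (u : E) :
    h v + ⟪h', u - v⟫_ℝ + μ / 2 * ‖u - v‖ ^ 2 ≤ h u := by
  have hd' : HasGradientAt (fun w => h w - μ / 2 * ‖w‖ ^ 2) (h' - μ • v) v := by
    rw [hasGradientAt_iff_hasFDerivAt, map_sub]
    exact (hasGradientAt_iff_hasFDerivAt.mp hd).fun_sub (hasGradientAt_half_mul_norm_sq μ v)
  have hle := (strongConvexOn_iff_convex.mp hc).add_inner_le_of_hasGradientAt hd' u
  have hnorm : ‖u‖ ^ 2 = ‖v‖ ^ 2 + 2 * ⟪v, u - v⟫_ℝ + ‖u - v‖ ^ 2 := by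
    rw [← norm_add_sq_real, add_sub_cancel]
  rw [inner_sub_left, real_inner_smul_left, hnorm] at hle
  linarith

theorem ConvexOn.inner_sub_nonneg_of_hasGradientAt {h : E → ℝ} {h' : E → E}
    (hc : ConvexOn ℝ univ h) (hd : ∀ w, HasGradientAt h (h' w) w) (u v : E) :
    0 ≤ ⟪h' u - h' v, u - v⟫_ℝ := by
  have huv := hc.add_inner_le_of_hasGradientAt (hd u) v
  have hvu := hc.add_inner_le_of_hasGradientAt (hd v) u
  rw [← neg_sub u v, inner_neg_right] at huv
  rw [inner_sub_left]
  linarith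

end Convex

section Bregman

variable {n : ℕ} {h : EuclideanSpace ℝ (Fin n) → ℝ}
  {h' : EuclideanSpace ℝ (Fin n) → EuclideanSpace ℝ (Fin n)}

@[simp]
theorem bregman_self (u : EuclideanSpace ℝ (Fin n)) : bregman h h' u u = 0 := by
  simp [bregman]

theorem StrongConvexOn.half_mul_sq_le_bregman {μ : ℝ} (hc : StrongConvexOn univ μ h)
    {u v : EuclideanSpace ℝ (Fin n)} (hd : HasGradientAt h (h' v) v) :
    μ / 2 * ‖u - v‖ ^ 2 ≤ bregman h h' u v := by
  have := hc.add_inner_add_sq_le_of_hasGradientAt hd u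
  rw [bregman]
  linarith

theorem hasGradientAt_bregman {u : EuclideanSpace ℝ (Fin n)} (hd : HasGradientAt h (h' u) u)
    (v : EuclideanSpace ℝ (Fin n)) :
    HasGradientAt (fun w => bregman h h' w v) (h' u - h' v) u := by
  rw [hasGradientAt_iff_hasFDerivAt] at hd ⊢
  refine ((hd.sub_const (h v)).fun_sub
    ((hasFDerivAt_const (h' v) u).inner ℝ ((hasFDerivAt_id u).sub_const v))).congr_fderiv ?_
  ext w
  simp

def IsBregmanProxStep (F h : EuclideanSpace ℝ (Fin n) → ℝ)
    (h' : EuclideanSpace ℝ (Fin n) → EuclideanSpace ℝ (Fin n))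
    (z₀ z₁ : EuclideanSpace ℝ (Fin n)) : Prop :=
  ∀ z, F z₁ + bregman h h' z₁ z₀ ≤ F z + bregman h h' z z₀

variable {F : EuclideanSpace ℝ (Fin n) → ℝ} {z₀ z₁ : EuclideanSpace ℝ (Fin n)}

theorem IsBregmanProxStep.add_sq_le_of_strongConvexOn_kernel {μ : ℝ}
    (hs : IsBregmanProxStep F h h' z₀ z₁) (hc : StrongConvexOn univ μ h)
    (hd : HasGradientAt h (h' z₀) z₀) :
    F z₁ + μ / 2 * ‖z₁ - z₀‖ ^ 2 ≤ F z₀ := by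
  have hmin := hs z₀
  have hbregman := hc.half_mul_sq_le_bregman (u := z₁) hd
  rw [bregman_self, add_zero] at hmin
  linarith

theorem IsBregmanProxStep.gradient_eq {F' : EuclideanSpace ℝ (Fin n)}
    (hs : IsBregmanProxStep F h h' z₀ z₁) (hF : HasGradientAt F F' z₁)
    (hd : HasGradientAt h (h' z₁) z₁) :
    F' = h' z₀ - h' z₁ := by
  have hG : HasFDerivAt (fun w => F w + bregman h h' w z₀)
      (toDual ℝ _ (F' + (h' z₁ - h' z₀))) z₁ := by
    rw [map_add]
    exact (hasGradientAt_iff_hasFDerivAt.mp hF).add (hasGradientAt_bregman hd z₀)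
  have hmin : IsLocalMin (fun w => F w + bregman h h' w z₀) z₁ := .of_forall hs
  have hzero := hmin.hasFDerivAt_eq_zero hG
  rw [LinearIsometryEquiv.map_eq_zero_iff] at hzero
  rw [← sub_eq_zero, ← hzero]
  abel

theorem IsBregmanProxStep.add_sq_le_of_strongConvexOn {μ : ℝ} {F' : EuclideanSpace ℝ (Fin n)}
    (hs : IsBregmanProxStep F h h' z₀ z₁) (hF : StrongConvexOn univ μ F)
    (hF' : HasGradientAt F F' z₁) (hc : ConvexOn ℝ univ h) (hd : ∀ w, HasGradientAt h (h' w) w) :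
    F z₁ + μ / 2 * ‖z₁ - z₀‖ ^ 2 ≤ F z₀ := by
  have hmono := hc.inner_sub_nonneg_of_hasGradientAt hd z₀ z₁
  have hle := hF.add_inner_add_sq_le_of_hasGradientAt hF' z₀
  rw [hs.gradient_eq hF' (hd z₁), norm_sub_rev] at hle
  linarith

end Bregman

section AugmentedLagrangian

variable {n₁ n₂ m : ℕ} {A : EuclideanSpace ℝ (Fin n₁) →L[ℝ] EuclideanSpace ℝ (Fin m)}
  {B : EuclideanSpace ℝ (Fin n₂) →L[ℝ] EuclideanSpace ℝ (Fin m)}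
  {f : EuclideanSpace ℝ (Fin n₁) → ℝ} {g : EuclideanSpace ℝ (Fin n₂) → ℝ} {α : ℝ}

theorem hasGradientAt_augL {f' x : EuclideanSpace ℝ (Fin n₁)} (hf : HasGradientAt f f' x)
    (y : EuclideanSpace ℝ (Fin n₂)) (p : EuclideanSpace ℝ (Fin m)) :
    HasGradientAt (fun w => augL A B f g α w y p) (f' + adjoint A (p + α • (A x - B y))) x := by
  have hr : HasFDerivAt (fun w => A w - B y) A x := A.hasFDerivAt.sub_const _
  rw [hasGradientAt_iff_hasFDerivAt] at hf ⊢
  refine ((((hf.add_const (g y)).add ((hasFDerivAt_const p x).inner ℝ hr)).add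
    (hr.norm_sq.const_mul (α / 2)))).congr_fderiv ?_
  ext w
  simp only [map_sub, sub_comp, add_apply, toDual_apply_apply, comp_apply,
    ContinuousLinearMap.prod_apply, zero_apply, fderivInnerCLM_apply, inner_zero_left, add_zero,
    smul_apply, sub_apply, coe_innerSL_apply, nsmul_eq_mul, Nat.cast_ofNat, smul_eq_mul, map_add,
    map_smul, adjoint_inner_left]
  ring

theorem augL_dual_update (x : EuclideanSpace ℝ (Fin n₁)) (y : EuclideanSpace ℝ (Fin n₂))
    (p : EuclideanSpace ℝ (Fin m)) :
    augL A B f g α x y (p + α • (A x - B y)) = augL A B f g α x y p + α * ‖A x - B y‖ ^ 2 := by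
  simp only [augL, inner_add_left, real_inner_smul_left, real_inner_self_eq_norm_sq]
  ring

theorem IsBregmanProxStep.adjoint_dual_update_eq {φ : EuclideanSpace ℝ (Fin n₁) → ℝ}
    {f' φ' : EuclideanSpace ℝ (Fin n₁) → EuclideanSpace ℝ (Fin n₁)}
    {x₀ x₁ : EuclideanSpace ℝ (Fin n₁)} {y : EuclideanSpace ℝ (Fin n₂)}
    {p : EuclideanSpace ℝ (Fin m)}
    (hs : IsBregmanProxStep (fun w => augL A B f g α w y p) φ φ' x₀ x₁)
    (hf : HasGradientAt f (f' x₁) x₁) (hφ : HasGradientAt φ (φ' x₁) x₁) :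
    adjoint A (p + α • (A x₁ - B y)) = φ' x₀ - φ' x₁ - f' x₁ := by
  rw [← hs.gradient_eq (hasGradientAt_augL hf y p) hφ]
  abel

end AugmentedLagrangian

theorem sq_norm_sub_le_of_adjoint_eq {E F : Type*} [NormedAddCommGroup E]
    [InnerProductSpace ℝ E] [CompleteSpace E] [NormedAddCommGroup F] [InnerProductSpace ℝ F]
    [CompleteSpace F] {A : E →L[ℝ] F} {μ₀ ℓf ℓφ : ℝ} {f' φ' : E → E}
    (hA : ∀ q, μ₀ * ‖q‖ ^ 2 ≤ ‖adjoint A q‖ ^ 2)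
    (hf' : ∀ u v, ‖f' u - f' v‖ ≤ ℓf * ‖u - v‖) (hφ' : ∀ u v, ‖φ' u - φ' v‖ ≤ ℓφ * ‖u - v‖)
    {q₁ q₂ : F} {u₀ u₁ u₂ : E}
    (h₁ : adjoint A q₁ = φ' u₀ - φ' u₁ - f' u₁) (h₂ : adjoint A q₂ = φ' u₁ - φ' u₂ - f' u₂) :
    μ₀ * ‖q₂ - q₁‖ ^ 2 ≤ 2 * (ℓf + ℓφ) ^ 2 * ‖u₂ - u₁‖ ^ 2 + 2 * ℓφ ^ 2 * ‖u₁ - u₀‖ ^ 2 := by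
  have hsplit : adjoint A (q₂ - q₁) = (f' u₁ - f' u₂) + (φ' u₁ - φ' u₂) + (φ' u₁ - φ' u₀) := by
    rw [map_sub, h₁, h₂]
    abel
  have hnorm : ‖adjoint A (q₂ - q₁)‖ ≤ (ℓf + ℓφ) * ‖u₂ - u₁‖ + ℓφ * ‖u₁ - u₀‖ :=
    calc ‖adjoint A (q₂ - q₁)‖
        ≤ ‖f' u₁ - f' u₂‖ + ‖φ' u₁ - φ' u₂‖ + ‖φ' u₁ - φ' u₀‖ := hsplit ▸ norm_add₃_le
      _ ≤ ℓf * ‖u₁ - u₂‖ + ℓφ * ‖u₁ - u₂‖ + ℓφ * ‖u₁ - u₀‖ := by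
        gcongr <;> apply_assumption
      _ = (ℓf + ℓφ) * ‖u₂ - u₁‖ + ℓφ * ‖u₁ - u₀‖ := by rw [norm_sub_rev u₁ u₂]; ring
  have hsq := pow_le_pow_left₀ (norm_nonneg _) hnorm 2
  nlinarith [hA (q₂ - q₁), sq_nonneg ((ℓf + ℓφ) * ‖u₂ - u₁‖ - ℓφ * ‖u₁ - u₀‖)]

theorem exists_pos_sufficient_decrease {κ μ ν b₁ b₂ : ℝ} (hκ : 0 < κ) (hν : 0 < ν)
    (hb₂ : 0 ≤ b₂) (hb : b₁ + b₂ < κ * μ) :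
    ∃ σ₀ > (0 : ℝ), ∃ σ₁ > (0 : ℝ), ∀ a a' u u' v w : ℝ, 0 ≤ u → 0 ≤ u' → 0 ≤ v →
      a' + μ * u' + ν * v ≤ a + w → κ * w ≤ b₁ * u' + b₂ * u →
      σ₁ * (u' + v) ≤ (a + σ₀ / 2 * u) - (a' + σ₀ / 2 * u') := by
  obtain ⟨δ, hδ, hμ⟩ : ∃ δ > 0, μ = b₁ / κ + b₂ / κ + δ :=
    ⟨μ - (b₁ / κ + b₂ / κ), by rw [gt_iff_lt, sub_pos, ← add_div, div_lt_iff₀ hκ]; linarith,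
      by ring⟩
  -- `σ₀ / 2 = b₂ / κ + δ / 2` pays for the old step `u` and leaves `δ / 2` of the slack on `u'`.
  refine ⟨2 * (b₂ / κ) + δ, by positivity, min (δ / 2) ν, lt_min (by positivity) hν, ?_⟩
  intro a a' u u' v w hu hu' hv hdesc hw
  have hw' : w ≤ b₁ / κ * u' + b₂ / κ * u := by
    rw [div_mul_eq_mul_div, div_mul_eq_mul_div, ← add_div, le_div_iff₀ hκ]
    linarith
  have h₁ : min (δ / 2) ν * u' ≤ δ / 2 * u' := mul_le_mul_of_nonneg_right (min_le_left _ _) hu'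
  have h₂ : min (δ / 2) ν * v ≤ ν * v := mul_le_mul_of_nonneg_right (min_le_right _ _) hv
  have hδu : 0 ≤ δ / 2 * u := by positivity
  subst hμ
  linear_combination hdesc + hw' + h₁ + h₂ + hδu

theorem badmm_lemma_III_5_general
{n₁ n₂ m : ℕ}
    (A : EuclideanSpace ℝ (Fin n₁) →L[ℝ] EuclideanSpace ℝ (Fin m))
    (B : EuclideanSpace ℝ (Fin n₂) →L[ℝ] EuclideanSpace ℝ (Fin m))
    (f : EuclideanSpace ℝ (Fin n₁) → ℝ) (g : EuclideanSpace ℝ (Fin n₂) → ℝ)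
    (f' : EuclideanSpace ℝ (Fin n₁) → EuclideanSpace ℝ (Fin n₁))
    (hfgrad : ∀ u, HasGradientAt f (f' u) u)
    (ℓf : ℝ) (hf' : ∀ u v, ‖f' u - f' v‖ ≤ ℓf * ‖u - v‖)
    (φ : EuclideanSpace ℝ (Fin n₁) → ℝ)
    (φ' : EuclideanSpace ℝ (Fin n₁) → EuclideanSpace ℝ (Fin n₁))
    (hφconv : ConvexOn ℝ Set.univ φ) (hφdiff : ∀ u, HasGradientAt φ (φ' u) u)
    (ℓφ : ℝ) (hφ' : ∀ u v, ‖φ' u - φ' v‖ ≤ ℓφ * ‖u - v‖)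
    (ψ : EuclideanSpace ℝ (Fin n₂) → ℝ)
    (ψ' : EuclideanSpace ℝ (Fin n₂) → EuclideanSpace ℝ (Fin n₂))
    (hψdiff : ∀ u, HasGradientAt ψ (ψ' u) u)
    (α μ₀ : ℝ) (hα : 0 < α) (hμ₀ : 0 < μ₀)
    (hA : ∀ q : EuclideanSpace ℝ (Fin m),
      μ₀ * ‖q‖ ^ 2 ≤ ‖ContinuousLinearMap.adjoint A q‖ ^ 2)
    (μ₁ : ℝ) (hμ₁ : 0 < μ₁)
    (hsc : (∀ (y : EuclideanSpace ℝ (Fin n₂)) (p : EuclideanSpace ℝ (Fin m)),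
          ConvexOn ℝ Set.univ (fun x => augL A B f g α x y p - μ₁ / 2 * ‖x‖ ^ 2)) ∨
        ConvexOn ℝ Set.univ (fun x => φ x - μ₁ / 2 * ‖x‖ ^ 2))
    (hαbig : α > 4 * ((ℓf + ℓφ) ^ 2 + ℓφ ^ 2) / (μ₁ * μ₀))
    (x : ℕ → EuclideanSpace ℝ (Fin n₁)) (y : ℕ → EuclideanSpace ℝ (Fin n₂))
    (p : ℕ → EuclideanSpace ℝ (Fin m))
    (hy : ∀ k, ∀ y' : EuclideanSpace ℝ (Fin n₂),
      augL A B f g α (x k) (y (k + 1)) (p k) + bregman ψ ψ' (y (k + 1)) (y k) ≤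
        augL A B f g α (x k) y' (p k) + bregman ψ ψ' y' (y k))
    (hx : ∀ k, ∀ x' : EuclideanSpace ℝ (Fin n₁),
      augL A B f g α (x (k + 1)) (y (k + 1)) (p k) + bregman φ φ' (x (k + 1)) (x k) ≤
        augL A B f g α x' (y (k + 1)) (p k) + bregman φ φ' x' (x k))
    (hp : ∀ k, p (k + 1) = p k + α • (A (x (k + 1)) - B (y (k + 1))))
    (μ₂ : ℝ) (hμ₂ : 0 < μ₂)
    (hψsc : ConvexOn ℝ Set.univ (fun z => ψ z - μ₂ / 2 * ‖z‖ ^ 2)) :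
    ∃ σ₀ > (0 : ℝ), ∃ σ₁ > (0 : ℝ), ∀ k : ℕ, 1 ≤ k →
      σ₁ * (‖x (k + 1) - x k‖ ^ 2 + ‖y (k + 1) - y k‖ ^ 2) ≤
        (augL A B f g α (x k) (y k) (p k) + σ₀ / 2 * ‖x k - x (k - 1)‖ ^ 2)
          - (augL A B f g α (x (k + 1)) (y (k + 1)) (p (k + 1))
              + σ₀ / 2 * ‖x (k + 1) - x k‖ ^ 2) := by
  have hxstep (k : ℕ) : IsBregmanProxStep (fun w => augL A B f g α w (y (k + 1)) (p k)) φ φ'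
      (x k) (x (k + 1)) := hx k
  have hystep (k : ℕ) : IsBregmanProxStep (fun w => augL A B f g α (x k) w (p k)) ψ ψ'
      (y k) (y (k + 1)) := hy k
  have hxdesc (k : ℕ) : augL A B f g α (x (k + 1)) (y (k + 1)) (p k)
      + μ₁ / 2 * ‖x (k + 1) - x k‖ ^ 2 ≤ augL A B f g α (x k) (y (k + 1)) (p k) := by
    rcases hsc with hLsc | hφsc
    · exact (hxstep k).add_sq_le_of_strongConvexOn (strongConvexOn_iff_convex.mpr (hLsc _ _))
        (hasGradientAt_augL (hfgrad _) _ _) hφconv hφdiff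
    · exact (hxstep k).add_sq_le_of_strongConvexOn_kernel (strongConvexOn_iff_convex.mpr hφsc)
        (hφdiff _)
  have hydesc (k : ℕ) : augL A B f g α (x k) (y (k + 1)) (p k)
      + μ₂ / 2 * ‖y (k + 1) - y k‖ ^ 2 ≤ augL A B f g α (x k) (y k) (p k) :=
    (hystep k).add_sq_le_of_strongConvexOn_kernel (strongConvexOn_iff_convex.mpr hψsc) (hψdiff _)
  have hadj (k : ℕ) : adjoint A (p (k + 1)) = φ' (x k) - φ' (x (k + 1)) - f' (x (k + 1)) := by
    rw [hp]
    exact (hxstep k).adjoint_dual_update_eq (hfgrad _) (hφdiff _)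
  obtain ⟨σ₀, hσ₀, σ₁, hσ₁, hdec⟩ := exists_pos_sufficient_decrease (μ := μ₁ / 2)
      (b₁ := 2 * (ℓf + ℓφ) ^ 2) (b₂ := 2 * ℓφ ^ 2) (mul_pos hα hμ₀) (half_pos hμ₂)
      (by positivity) (by rw [gt_iff_lt, div_lt_iff₀ (mul_pos hμ₁ hμ₀)] at hαbig; linarith)
  refine ⟨σ₀, hσ₀, σ₁, hσ₁, fun k hk => ?_⟩
  obtain ⟨j, rfl⟩ := Nat.exists_eq_add_of_le' hk
  rw [Nat.add_sub_cancel]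
  refine hdec _ _ _ _ _ (α * ‖A (x (j + 1 + 1)) - B (y (j + 1 + 1))‖ ^ 2)
    (sq_nonneg _) (sq_nonneg _) (sq_nonneg _) ?_ ?_
  · rw [hp (j + 1), augL_dual_update]
    linarith [hxdesc (j + 1), hydesc (j + 1)]
  · have hdual := sq_norm_sub_le_of_adjoint_eq hA hf' hφ' (hadj j) (hadj (j + 1))
    rw [hp (j + 1), add_sub_cancel_left, norm_smul, Real.norm_of_nonneg hα.le] at hdual
    linear_combination hdual

theorem badmm_lemma_III_5
{n₁ n₂ m : ℕ} (hn₁ : 0 < n₁) (hn₂ : 0 < n₂) (hm : 0 < m)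
    (A : EuclideanSpace ℝ (Fin n₁) →L[ℝ] EuclideanSpace ℝ (Fin m))
    (B : EuclideanSpace ℝ (Fin n₂) →L[ℝ] EuclideanSpace ℝ (Fin m))
    (f : EuclideanSpace ℝ (Fin n₁) → ℝ) (g : EuclideanSpace ℝ (Fin n₂) → ℝ)
    (f' : EuclideanSpace ℝ (Fin n₁) → EuclideanSpace ℝ (Fin n₁))
    (hfC1 : ContDiff ℝ 1 f) (hfgrad : ∀ u, HasGradientAt f (f' u) u)
    (ℓf : ℝ) (hℓf : 0 ≤ ℓf) (hf' : ∀ u v, ‖f' u - f' v‖ ≤ ℓf * ‖u - v‖)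
    (hg : LowerSemicontinuous g)
    (φ : EuclideanSpace ℝ (Fin n₁) → ℝ)
    (φ' : EuclideanSpace ℝ (Fin n₁) → EuclideanSpace ℝ (Fin n₁))
    (hφconv : ConvexOn ℝ Set.univ φ) (hφdiff : ∀ u, HasGradientAt φ (φ' u) u)
    (ℓφ : ℝ) (hℓφ : 0 ≤ ℓφ) (hφ' : ∀ u v, ‖φ' u - φ' v‖ ≤ ℓφ * ‖u - v‖)
    (ψ : EuclideanSpace ℝ (Fin n₂) → ℝ)
    (ψ' : EuclideanSpace ℝ (Fin n₂) → EuclideanSpace ℝ (Fin n₂))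
    (hψconv : ConvexOn ℝ Set.univ ψ) (hψdiff : ∀ u, HasGradientAt ψ (ψ' u) u)
    (ℓψ : ℝ) (hℓψ : 0 ≤ ℓψ) (hψ' : ∀ u v, ‖ψ' u - ψ' v‖ ≤ ℓψ * ‖u - v‖)
    (α μ₀ : ℝ) (hα : 0 < α) (hμ₀ : 0 < μ₀)
    (hA : ∀ q : EuclideanSpace ℝ (Fin m),
      μ₀ * ‖q‖ ^ 2 ≤ ‖ContinuousLinearMap.adjoint A q‖ ^ 2)
    (μ₁ : ℝ) (hμ₁ : 0 < μ₁)
    (hsc : (∀ (y : EuclideanSpace ℝ (Fin n₂)) (p : EuclideanSpace ℝ (Fin m)),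
          ConvexOn ℝ Set.univ (fun x => augL A B f g α x y p - μ₁ / 2 * ‖x‖ ^ 2)) ∨
        ConvexOn ℝ Set.univ (fun x => φ x - μ₁ / 2 * ‖x‖ ^ 2))
    (hαbig : α > 4 * ((ℓf + ℓφ) ^ 2 + ℓφ ^ 2) / (μ₁ * μ₀))
    (x : ℕ → EuclideanSpace ℝ (Fin n₁)) (y : ℕ → EuclideanSpace ℝ (Fin n₂))
    (p : ℕ → EuclideanSpace ℝ (Fin m))
    (hy : ∀ k, ∀ y' : EuclideanSpace ℝ (Fin n₂),
      augL A B f g α (x k) (y (k + 1)) (p k) + bregman ψ ψ' (y (k + 1)) (y k) ≤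
        augL A B f g α (x k) y' (p k) + bregman ψ ψ' y' (y k))
    (hx : ∀ k, ∀ x' : EuclideanSpace ℝ (Fin n₁),
      augL A B f g α (x (k + 1)) (y (k + 1)) (p k) + bregman φ φ' (x (k + 1)) (x k) ≤
        augL A B f g α x' (y (k + 1)) (p k) + bregman φ φ' x' (x k))
    (hp : ∀ k, p (k + 1) = p k + α • (A (x (k + 1)) - B (y (k + 1))))
    (μ₂ : ℝ) (hμ₂ : 0 < μ₂)
    (hψsc : ConvexOn ℝ Set.univ (fun z => ψ z - μ₂ / 2 * ‖z‖ ^ 2)) :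
    ∃ σ₀ > (0 : ℝ), ∃ σ₁ > (0 : ℝ), ∀ k : ℕ, 1 ≤ k →
      σ₁ * (‖x (k + 1) - x k‖ ^ 2 + ‖y (k + 1) - y k‖ ^ 2) ≤
        (augL A B f g α (x k) (y k) (p k) + σ₀ / 2 * ‖x k - x (k - 1)‖ ^ 2)
          - (augL A B f g α (x (k + 1)) (y (k + 1)) (p (k + 1))
              + σ₀ / 2 * ‖x (k + 1) - x k‖ ^ 2) :=
  badmm_lemma_III_5_general A B f g f' hfgrad ℓf hf' φ φ' hφconv hφdiff ℓφ hφ' ψ ψ' hψdiff α μ₀ hα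
    hμ₀ hA μ₁ hμ₁ hsc hαbig x y p hy hx hp μ₂ hμ₂ hψsc
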